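/- Let p, d, q, n ∈ ℕ, let E : ℝ^p → ℝ^d be differentiable, let F_1, …, F_n : ℝ^d → ℝ^d each be three times continuously differentiable (ContDiff ℝ 3), let W : ℝ^d → ℝ^q be a continuous linear map and b ∈ ℝ^q, define f_λ(x) = W(R_λ(E(x))) + b with R_λ = (id + λF_n) ∘ ⋯ ∘ (id + λF_1), and let D ⊆ ℝ^p be a nonempty finite dataset. Writing J_λ(x) for the matrix (in standard bases) of the Fréchet derivative of f_λ at x, A(x) for the matrix of W ∘ (DE)(x), and B(x) for the matrix of Σ_{i=1}^n W ∘ (DF_i)(E(x)) ∘ (DE)(x), the geometric complexity ⟨f_λ, D⟩_G = (1/|D|) Σ_{x ∈ D} ‖J_λ(x)‖_F² satisfies: λ ↦ ⟨f_λ, D⟩_G − ( (1/|D|) Σ_{x ∈ D} ‖A(x)‖_F² + 2λ · (1/|D|) Σ_{x ∈ D} Tr(A(x)ᵀ B(x)) ) is O(λ²) as λ → 0. -/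

import Mathlib

open Topology Asymptotics Finset Matrix

/-- A single residual block `(1 + λ F)(z) = z + λ • F z`. -/
noncomputable def resBlock {d : ℕ} (lam : ℝ)
    (F : EuclideanSpace ℝ (Fin d) → EuclideanSpace ℝ (Fin d)) :
    EuclideanSpace ℝ (Fin d) → EuclideanSpace ℝ (Fin d) :=
  fun z => z + lam • F z

/-- The residual tower `(1 + λ F_m) ∘ ⋯ ∘ (1 + λ F_1)` built from the blocks
`F 1, …, F m`. -/
noncomputable def resTower {d : ℕ} (lam : ℝ)
    (F : ℕ → EuclideanSpace ℝ (Fin d) → EuclideanSpace ℝ (Fin d)) :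
    ℕ → EuclideanSpace ℝ (Fin d) → EuclideanSpace ℝ (Fin d)
  | 0 => id
  | m + 1 => resBlock lam (F (m + 1)) ∘ resTower lam F m

/-- The matrix, in the standard bases, of a continuous linear map
`ℝ^p → ℝ^q`. -/
noncomputable def clmMatrix {p q : ℕ}
    (T : EuclideanSpace ℝ (Fin p) →L[ℝ] EuclideanSpace ℝ (Fin q)) :
    Matrix (Fin q) (Fin p) ℝ :=
  Matrix.of fun i j => T (EuclideanSpace.single j 1) i

/-- The Frobenius norm `‖C‖_F = √(∑ᵢⱼ Cᵢⱼ²)` of a real matrix. -/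
noncomputable def frobNorm {q p : ℕ} (C : Matrix (Fin q) (Fin p) ℝ) : ℝ :=
  Real.sqrt (∑ i, ∑ j, C i j ^ 2)

/-! Since `D R^{m+1}_λ = (id + λ DF_{m+1}(R^m_λ)) ∘ D R^m_λ`, induction on the number of
blocks shows that `λ ↦ D R_λ(z)` has value `id` and derivative `∑ᵢ DFᵢ(z)` at `λ = 0`; it is
moreover `C²` because the tower is jointly `C³` in `(λ, z)`. Each entry of the Jacobian
`J_λ(x) = W ∘ D R_λ(E x) ∘ DE(x)` is a linear functional of `D R_λ(E x)`, so the geometric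
complexity is a `C²` function of `λ` with value `(1/|D|) ∑ ‖A‖_F²` and derivative
`(2/|D|) ∑ Tr(AᵀB)` at `0`, and a `C²` function agrees with its first-order Taylor polynomial
up to `O(λ²)`. -/
theorem taylor_one_isBigO {E : Type*} [NormedAddCommGroup E] [NormedSpace ℝ E]
    {f : ℝ → E} {f' : E} {x₀ : ℝ} (hf : ContDiff ℝ 2 f) (hf' : HasDerivAt f f' x₀) :
    (fun x => f x - (f x₀ + (x - x₀) • f')) =O[𝓝 x₀] fun x => (x - x₀) ^ 2 := by
  obtain ⟨hdf, -, hdf2⟩ := (contDiff_succ_iff_deriv (n := 1)).1 hf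
  obtain rfl := hf'.deriv
  set f'' := deriv (deriv f) x₀
  have hf'' : HasDerivAt (deriv f) f'' x₀ :=
    ((hdf2.differentiable one_ne_zero) x₀).hasDerivAt
  -- after removing the quadratic term, the remainder has derivative `o(x - x₀)`
  have hrem : (fun x => f x - (f x₀ + (x - x₀) • deriv f x₀) - ((x - x₀) ^ 2 / 2) • f'')
      =o[𝓝 x₀] fun x => (x - x₀) ^ 2 := by
    have := Convex.isLittleO_pow_succ_real convex_univ (Set.mem_univ x₀) (n := 1)
      (f := fun x => f x - (f x₀ + (x - x₀) • deriv f x₀) - ((x - x₀) ^ 2 / 2) • f'')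
      (f' := fun x => deriv f x - deriv f x₀ - (x - x₀) • f'') ?_ ?_
    · simpa using this
    · intro x _
      have hlin := (((hasDerivAt_id x).sub_const x₀).smul_const (deriv f x₀)).const_add (f x₀)
      have hquad := ((((hasDerivAt_id x).sub_const x₀).pow 2).div_const 2).smul_const f''
      convert ((hdf x).hasDerivAt.sub hlin).sub hquad |>.hasDerivWithinAt using 1
      · rfl
      · norm_num
    · simpa using hasDerivAt_iff_isLittleO.1 hf''
  have hquad : (fun x => ((x - x₀) ^ 2 / 2) • f'') =O[𝓝 x₀] fun x => (x - x₀) ^ 2 :=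
    isBigO_of_le' (c := ‖f''‖ / 2) _ fun x =>
      le_of_eq (by rw [norm_smul, norm_div, Real.norm_two]; ring)
  simpa using hrem.isBigO.add hquad

section Frobenius

variable {p q : ℕ}

noncomputable def clmEntry (i : Fin q) (j : Fin p) :
    (EuclideanSpace ℝ (Fin p) →L[ℝ] EuclideanSpace ℝ (Fin q)) →L[ℝ] ℝ :=
  (EuclideanSpace.proj i).comp (ContinuousLinearMap.apply ℝ _ (EuclideanSpace.single j 1))

@[simp]
theorem clmEntry_apply (i : Fin q) (j : Fin p)
    (T : EuclideanSpace ℝ (Fin p) →L[ℝ] EuclideanSpace ℝ (Fin q)) :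
    clmEntry i j T = clmMatrix T i j :=
  rfl

theorem frobNorm_sq (C : Matrix (Fin q) (Fin p) ℝ) : frobNorm C ^ 2 = ∑ i, ∑ j, C i j ^ 2 :=
  Real.sq_sqrt (by positivity)

theorem trace_transpose_mul_eq_sum (A B : Matrix (Fin q) (Fin p) ℝ) :
    trace (Aᵀ * B) = ∑ i, ∑ j, A i j * B i j := by
  rw [trace_mul_comm, ← sum_hadamard_eq]
  simp [mul_comm]

theorem frobNorm_clmMatrix_sq (T : EuclideanSpace ℝ (Fin p) →L[ℝ] EuclideanSpace ℝ (Fin q)) :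
    frobNorm (clmMatrix T) ^ 2 = ∑ i, ∑ j, clmEntry i j T ^ 2 :=
  frobNorm_sq _

variable {Φ : ℝ → EuclideanSpace ℝ (Fin p) →L[ℝ] EuclideanSpace ℝ (Fin q)}

theorem ContDiff.frobNorm_clmMatrix_sq {k : WithTop ℕ∞} (hΦ : ContDiff ℝ k Φ) :
    ContDiff ℝ k fun t => frobNorm (clmMatrix (Φ t)) ^ 2 := by
  simp_rw [_root_.frobNorm_clmMatrix_sq]
  exact ContDiff.sum fun i _ => ContDiff.sum fun j _ => ((clmEntry i j).contDiff.comp hΦ).pow 2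

theorem HasDerivAt.frobNorm_clmMatrix_sq
    {Φ' : EuclideanSpace ℝ (Fin p) →L[ℝ] EuclideanSpace ℝ (Fin q)} {a : ℝ}
    (hΦ : HasDerivAt Φ Φ' a) :
    HasDerivAt (fun t => frobNorm (clmMatrix (Φ t)) ^ 2)
      (2 * trace ((clmMatrix (Φ a))ᵀ * clmMatrix Φ')) a := by
  simp_rw [_root_.frobNorm_clmMatrix_sq, trace_transpose_mul_eq_sum, mul_sum]
  refine HasDerivAt.fun_sum fun i _ => HasDerivAt.fun_sum fun j _ => ?_
  refine (((clmEntry i j).hasFDerivAt.comp_hasDerivAt a hΦ).fun_pow 2).congr_deriv ?_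
  simp only [Function.comp_apply, clmEntry_apply]
  ring

end Frobenius

section ResTower

variable {d : ℕ} {F : ℕ → EuclideanSpace ℝ (Fin d) → EuclideanSpace ℝ (Fin d)}

theorem resTower_scale_zero (m : ℕ) : resTower 0 F m = id := by
  induction m with
  | zero => rfl
  | succ m ih => funext z; simp [resTower, resBlock, ih]

theorem contDiff_resTower {k : WithTop ℕ∞} {m : ℕ}
    (hF : ∀ i ∈ Icc 1 m, ContDiff ℝ k (F i)) :
    ContDiff ℝ k (fun p : ℝ × EuclideanSpace ℝ (Fin d) => resTower p.1 F m p.2) := by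
  induction m with
  | zero => exact contDiff_snd
  | succ m ih =>
    have hR := ih fun i hi => hF i (Icc_subset_Icc_right m.le_succ hi)
    have hFm : ContDiff ℝ k (F (m + 1)) := hF _ (right_mem_Icc.2 (Nat.le_add_left 1 m))
    exact hR.add (contDiff_fst.smul (hFm.comp hR))

theorem differentiable_resTower {m : ℕ} (hF : ∀ i ∈ Icc 1 m, ContDiff ℝ 1 (F i)) (lam : ℝ) :
    Differentiable ℝ (resTower lam F m) :=
  ((contDiff_resTower hF).comp (contDiff_const.prodMk contDiff_id)).differentiable one_ne_zero

theorem fderiv_resTower_succ {lam : ℝ} {m : ℕ} {z : EuclideanSpace ℝ (Fin d)}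
    (hR : DifferentiableAt ℝ (resTower lam F m) z)
    (hF : DifferentiableAt ℝ (F (m + 1)) (resTower lam F m z)) :
    fderiv ℝ (resTower lam F (m + 1)) z =
      (ContinuousLinearMap.id ℝ _ + lam • fderiv ℝ (F (m + 1)) (resTower lam F m z)).comp
        (fderiv ℝ (resTower lam F m) z) :=
  ((hasFDerivAt_id _).add (hF.hasFDerivAt.const_smul lam) |>.comp z hR.hasFDerivAt).fderiv

theorem hasDerivAt_fderiv_resTower {m : ℕ} (hF : ∀ i ∈ Icc 1 m, ContDiff ℝ 2 (F i))
    (z : EuclideanSpace ℝ (Fin d)) :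
    HasDerivAt (fun lam : ℝ => fderiv ℝ (resTower lam F m) z)
      (∑ i ∈ Icc 1 m, fderiv ℝ (F i) z) 0 := by
  induction m with
  | zero => simpa [resTower] using hasDerivAt_const (0 : ℝ) (ContinuousLinearMap.id ℝ _)
  | succ m ih =>
    have hF' : ∀ i ∈ Icc 1 m, ContDiff ℝ 2 (F i) :=
      fun i hi => hF i (Icc_subset_Icc_right m.le_succ hi)
    have hFm : ContDiff ℝ 2 (F (m + 1)) := hF _ (right_mem_Icc.2 (Nat.le_add_left 1 m))
    have hR := contDiff_resTower hF'
    have hRz := differentiable_resTower fun i hi => (hF' i hi).of_le one_le_two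
    set A := fun lam : ℝ => fderiv ℝ (F (m + 1)) (resTower lam F m z)
    have hA : Differentiable ℝ A :=
      ((hFm.fderiv_right (m := 1) le_rfl).comp
        ((hR.comp (contDiff_id.prodMk contDiff_const)).of_le one_le_two)).differentiable
        one_ne_zero
    have hblock :
        HasDerivAt (fun lam : ℝ => ContinuousLinearMap.id ℝ _ + lam • A lam) (A 0) 0 := by
      have hsmul : HasDerivAt (fun lam : ℝ => lam • A lam) (A 0) 0 :=
        ((hasDerivAt_id (0 : ℝ)).smul (hA 0).hasDerivAt).congr_deriv (by simp)
      exact hsmul.const_add _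
    have hstep : (fun lam : ℝ => fderiv ℝ (resTower lam F (m + 1)) z) =
        fun lam => (ContinuousLinearMap.id ℝ _ + lam • A lam).comp
          (fderiv ℝ (resTower lam F m) z) := by
      funext lam
      exact fderiv_resTower_succ (hRz lam z) ((hFm.differentiable two_ne_zero) _)
    rw [hstep, sum_Icc_succ_top (Nat.le_add_left 1 m)]
    convert hblock.clm_comp (ih hF') using 1
    simp [A, resTower_scale_zero, add_comm]

theorem contDiff_fderiv_resTower {m : ℕ} (hF : ∀ i ∈ Icc 1 m, ContDiff ℝ 3 (F i))
    (z : EuclideanSpace ℝ (Fin d)) :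
    ContDiff ℝ 2 (fun lam : ℝ => fderiv ℝ (resTower lam F m) z) :=
  (contDiff_resTower hF).fderiv contDiff_const (by norm_num)

end ResTower

section ResNet

variable {p d q : ℕ} {E : EuclideanSpace ℝ (Fin p) → EuclideanSpace ℝ (Fin d)}
  {F : ℕ → EuclideanSpace ℝ (Fin d) → EuclideanSpace ℝ (Fin d)}
  {W : EuclideanSpace ℝ (Fin d) →L[ℝ] EuclideanSpace ℝ (Fin q)} {b : EuclideanSpace ℝ (Fin q)}
  {m : ℕ} {x : EuclideanSpace ℝ (Fin p)}

theorem fderiv_resNet {lam : ℝ} (hR : DifferentiableAt ℝ (resTower lam F m) (E x))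
    (hE : DifferentiableAt ℝ E x) :
    fderiv ℝ (fun y => W (resTower lam F m (E y)) + b) x =
      W.comp ((fderiv ℝ (resTower lam F m) (E x)).comp (fderiv ℝ E x)) :=
  ((W.hasFDerivAt.comp x (hR.hasFDerivAt.comp x hE.hasFDerivAt)).add_const b).fderiv

theorem fderiv_resNet_scale_zero (hE : DifferentiableAt ℝ E x) :
    fderiv ℝ (fun y => W (resTower 0 F m (E y)) + b) x = W.comp (fderiv ℝ E x) := by
  simp only [resTower_scale_zero, id]
  exact ((W.hasFDerivAt.comp x hE.hasFDerivAt).add_const b).fderiv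

theorem hasDerivAt_fderiv_resNet (hE : DifferentiableAt ℝ E x)
    (hF : ∀ i ∈ Icc 1 m, ContDiff ℝ 2 (F i)) :
    HasDerivAt (fun lam : ℝ => fderiv ℝ (fun y => W (resTower lam F m (E y)) + b) x)
      (∑ i ∈ Icc 1 m, W.comp ((fderiv ℝ (F i) (E x)).comp (fderiv ℝ E x))) 0 := by
  have hR := differentiable_resTower fun i hi => (hF i hi).of_le one_le_two
  simp_rw [fderiv_resNet (hR _ _) hE]
  convert (hasDerivAt_const (0 : ℝ) W).clm_comp
    ((hasDerivAt_fderiv_resTower hF (E x)).clm_comp (hasDerivAt_const 0 (fderiv ℝ E x))) using 1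
  ext
  simp

theorem contDiff_fderiv_resNet (hE : DifferentiableAt ℝ E x)
    (hF : ∀ i ∈ Icc 1 m, ContDiff ℝ 3 (F i)) :
    ContDiff ℝ 2 (fun lam : ℝ => fderiv ℝ (fun y => W (resTower lam F m (E y)) + b) x) := by
  have hR := differentiable_resTower fun i hi => (hF i hi).of_le (by norm_num)
  simp_rw [fderiv_resNet (hR _ _) hE]
  exact contDiff_const.clm_comp ((contDiff_fderiv_resTower hF (E x)).clm_comp contDiff_const)

end ResNet

theorem isBigO_sum_frobNorm_clmMatrix_sq_sub {ι : Type*} {p q : ℕ} (D : Finset ι)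
    {Φ : ι → ℝ → EuclideanSpace ℝ (Fin p) →L[ℝ] EuclideanSpace ℝ (Fin q)}
    {Φ' : ι → EuclideanSpace ℝ (Fin p) →L[ℝ] EuclideanSpace ℝ (Fin q)}
    (hΦ : ∀ x ∈ D, ContDiff ℝ 2 (Φ x)) (hΦ' : ∀ x ∈ D, HasDerivAt (Φ x) (Φ' x) 0) :
    (fun t : ℝ =>
        (∑ x ∈ D, frobNorm (clmMatrix (Φ x t)) ^ 2) / D.card -
          ((∑ x ∈ D, frobNorm (clmMatrix (Φ x 0)) ^ 2) / D.card +
            2 * t * ((∑ x ∈ D, trace ((clmMatrix (Φ x 0))ᵀ * clmMatrix (Φ' x))) / D.card)))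
      =O[𝓝 0] fun t => t ^ 2 := by
  have hg : ContDiff ℝ 2 fun t => (∑ x ∈ D, frobNorm (clmMatrix (Φ x t)) ^ 2) / D.card :=
    (ContDiff.sum fun x hx => (hΦ x hx).frobNorm_clmMatrix_sq).div_const _
  have hg' := (HasDerivAt.fun_sum fun x hx => (hΦ' x hx).frobNorm_clmMatrix_sq).div_const
    (D.card : ℝ)
  refine (taylor_one_isBigO hg hg').congr (fun t => ?_) (fun t => by rw [sub_zero])
  simp only [sub_zero, smul_eq_mul, ← mul_sum]
  ring

theorem geometric_complexity_expansion_general (p d q n : ℕ)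
    (E : EuclideanSpace ℝ (Fin p) → EuclideanSpace ℝ (Fin d))
    (hE : Differentiable ℝ E)
    (F : ℕ → EuclideanSpace ℝ (Fin d) → EuclideanSpace ℝ (Fin d))
    (hF : ∀ i ∈ Finset.Icc 1 n, ContDiff ℝ 3 (F i))
    (W : EuclideanSpace ℝ (Fin d) →L[ℝ] EuclideanSpace ℝ (Fin q))
    (b : EuclideanSpace ℝ (Fin q))
    (D : Finset (EuclideanSpace ℝ (Fin p))) :
    (fun lam : ℝ =>
        (∑ x ∈ D,
            frobNorm (clmMatrix
              (fderiv ℝ (fun y => W (resTower lam F n (E y)) + b) x)) ^ 2) / D.card -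
          ((∑ x ∈ D, frobNorm (clmMatrix (W.comp (fderiv ℝ E x))) ^ 2) / D.card
             + 2 * lam *
               ((∑ x ∈ D,
                   Matrix.trace
                     ((clmMatrix (W.comp (fderiv ℝ E x)))ᵀ *
                       clmMatrix (∑ i ∈ Finset.Icc 1 n,
                         W.comp ((fderiv ℝ (F i) (E x)).comp (fderiv ℝ E x))))) / D.card)))
      =O[𝓝 0] (fun lam : ℝ => lam ^ 2) := by
  have hF2 : ∀ i ∈ Icc 1 n, ContDiff ℝ 2 (F i) := fun i hi => (hF i hi).of_le (by norm_num)
  simpa only [fderiv_resNet_scale_zero (hE _)] using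
    isBigO_sum_frobNorm_clmMatrix_sq_sub D (fun x _ => contDiff_fderiv_resNet (hE x) hF)
      (fun x _ => hasDerivAt_fderiv_resNet (W := W) (b := b) (hE x) hF2)

/-- **First-order behavior of the geometric complexity in the residual scale λ.**
For the residual network `f_λ(x) = W(R_λ(E(x))) + b`, with Jacobian matrix `J_λ(x)`,
`A(x)` the matrix of `W ∘ (D E)(x)` and `B(x)` the matrix of
`∑ᵢ W ∘ (D Fᵢ)(E(x)) ∘ (D E)(x)`, the geometric complexity
`⟨f_λ, D⟩_G = (1/|D|) ∑_{x ∈ D} ‖J_λ(x)‖_F²` over a nonempty finite dataset `D`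
satisfies `⟨f_λ, D⟩_G = (1/|D|) ∑_x ‖A(x)‖_F² + 2λ (1/|D|) ∑_x Tr(A(x)ᵀ B(x)) + O(λ²)`
as `λ → 0`. -/
theorem geometric_complexity_expansion (p d q n : ℕ)
    (E : EuclideanSpace ℝ (Fin p) → EuclideanSpace ℝ (Fin d))
    (hE : Differentiable ℝ E)
    (F : ℕ → EuclideanSpace ℝ (Fin d) → EuclideanSpace ℝ (Fin d))
    (hF : ∀ i ∈ Finset.Icc 1 n, ContDiff ℝ 3 (F i))
    (W : EuclideanSpace ℝ (Fin d) →L[ℝ] EuclideanSpace ℝ (Fin q))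
    (b : EuclideanSpace ℝ (Fin q))
    (D : Finset (EuclideanSpace ℝ (Fin p))) (hD : D.Nonempty) :
    (fun lam : ℝ =>
        (∑ x ∈ D,
            frobNorm (clmMatrix
              (fderiv ℝ (fun y => W (resTower lam F n (E y)) + b) x)) ^ 2) / D.card -
          ((∑ x ∈ D, frobNorm (clmMatrix (W.comp (fderiv ℝ E x))) ^ 2) / D.card
             + 2 * lam *
               ((∑ x ∈ D,
                   Matrix.trace
                     ((clmMatrix (W.comp (fderiv ℝ E x)))ᵀ *
                       clmMatrix (∑ i ∈ Finset.Icc 1 n,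
                         W.comp ((fderiv ℝ (F i) (E x)).comp (fderiv ℝ E x))))) / D.card)))
      =O[𝓝 0] (fun lam : ℝ => lam ^ 2) :=
  geometric_complexity_expansion_general p d q n E hE F hF W b D
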